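/- arXiv:1201.4981 — 2 statements merged into one kernel-verified Lean document; each statement's English description precedes it below -/
import Mathlib

section
/- Let ⊗ be a monoidal structure and ⋆ a right-monoidal structure on the same category with the same unit object R, and let T = ⟨R⋆−, μ, η⟩ be the canonical monad of the ⋆-structure. If there exists a natural isomorphism w_{M,N} : M⊗TN → M⋆N satisfying the heptagon (w_{L,M}⋆N)∘w_{L⊗TM,N}∘α_{L,TM,TN}∘(L⊗w⁻¹_{TM,N})∘(L⊗γ_{R,M,N}) = γ_{L,M,N}∘w_{L,M⋆N} and the tetragon ε_M∘w_{M,R} = r_M∘(M⊗ε_R), then T^{M,N} := w⁻¹_{TM,N}∘γ_{R,M,N}∘Tw_{M,N}∘T(M⊗η_N) and T⁰ := ε_R define a ⊗-opmonoidal structure on the monad T, making T a ⊗-bimonad. -/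
open CategoryTheory

universe v u

/-- A right-monoidal (skew-monoidal) category structure on a category `C`
with unit object `R`: a product `⋆`, a skew-associator `γ`, a unit `η` and
a counit `ε`, none of which is assumed invertible, subject to the pentagon
and the four (co)unit axioms. -/
structure RightMonoidalStruct (C : Type u) [Category.{v} C] (R : C) where
  smp : C → C → C
  smpHom : ∀ {X X' Y Y' : C}, (X ⟶ X') → (Y ⟶ Y') → (smp X Y ⟶ smp X' Y')
  smpHom_id : ∀ (X Y : C), smpHom (𝟙 X) (𝟙 Y) = 𝟙 (smp X Y)
  smpHom_comp : ∀ {X X' X'' Y Y' Y'' : C} (f : X ⟶ X') (f' : X' ⟶ X'')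
      (g : Y ⟶ Y') (g' : Y' ⟶ Y''),
      smpHom (f ≫ f') (g ≫ g') = smpHom f g ≫ smpHom f' g'
  γ : ∀ (L M N : C), smp L (smp M N) ⟶ smp (smp L M) N
  η : ∀ (M : C), M ⟶ smp R M
  ε : ∀ (M : C), smp M R ⟶ M
  γ_natural : ∀ {L L' M M' N N' : C} (f : L ⟶ L') (g : M ⟶ M') (h : N ⟶ N'),
      smpHom f (smpHom g h) ≫ γ L' M' N' = γ L M N ≫ smpHom (smpHom f g) h
  η_natural : ∀ {M M' : C} (f : M ⟶ M'), f ≫ η M' = η M ≫ smpHom (𝟙 R) f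
  ε_natural : ∀ {M M' : C} (f : M ⟶ M'), smpHom f (𝟙 R) ≫ ε M' = ε M ≫ f
  pentagon : ∀ (K L M N : C),
      smpHom (𝟙 K) (γ L M N) ≫ γ K (smp L M) N ≫ smpHom (γ K L M) (𝟙 N)
        = γ K L (smp M N) ≫ γ (smp K L) M N
  unit_triangle : ∀ (M N : C), η (smp M N) ≫ γ R M N = smpHom (η M) (𝟙 N)
  counit_triangle : ∀ (M N : C), γ M N R ≫ ε (smp M N) = smpHom (𝟙 M) (ε N)
  mixed_triangle : ∀ (M N : C),
      smpHom (𝟙 M) (η N) ≫ γ M R N ≫ smpHom (ε M) (𝟙 N) = 𝟙 (smp M N)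
  unit_counit : η R ≫ ε R = 𝟙 R


variable {C : Type u} [Category.{v} C] {R : C}

/-- The multiplication `μ_M := (ε_R ⋆ M) ∘ γ_{R,R,M}` of the canonical monad `T = R ⋆ -`. -/
def RightMonoidalStruct.μ (S : RightMonoidalStruct C R) (M : C) :
    S.smp R (S.smp R M) ⟶ S.smp R M :=
  S.γ R R M ≫ S.smpHom (S.ε R) (𝟙 M)

/-- The comultiplication `δ_M := γ_{M,R,R} ∘ (M ⋆ η_R)` of the canonical comonad `Q = - ⋆ R`. -/
def RightMonoidalStruct.δ (S : RightMonoidalStruct C R) (M : C) :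
    S.smp M R ⟶ S.smp (S.smp M R) R :=
  S.smpHom (𝟙 M) (S.η R) ≫ S.γ M R R


/-- A "representing" natural isomorphism `w_{M,N} : M ⊗ TN ≅ M ⋆ N` (where
`T = R ⋆ -` is the canonical monad of the `⋆`-structure `S` and `⊗` is the
structure `Sx`), satisfying the heptagon and tetragon equations. -/
structure GoodW (S Sx : RightMonoidalStruct C R)
    (w : ∀ M N : C, Sx.smp M (S.smp R N) ⟶ S.smp M N) : Prop where
  natural : ∀ {M M' N N' : C} (f : M ⟶ M') (g : N ⟶ N'),
      Sx.smpHom f (S.smpHom (𝟙 R) g) ≫ w M' N' = w M N ≫ S.smpHom f g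
  iso : ∀ M N : C, IsIso (w M N)
  heptagon : ∀ L M N : C,
      Sx.smpHom (𝟙 L) (S.γ R M N)
          ≫ Sx.smpHom (𝟙 L) (@inv _ _ _ _ (w (S.smp R M) N) (iso (S.smp R M) N))
          ≫ Sx.γ L (S.smp R M) (S.smp R N)
          ≫ w (Sx.smp L (S.smp R M)) N
          ≫ S.smpHom (w L M) (𝟙 N)
        = w L (S.smp M N) ≫ S.γ L M N
  tetragon : ∀ M : C,
      w M R ≫ S.ε M = Sx.smpHom (𝟙 M) (S.ε R) ≫ Sx.ε M

section Aux

variable (S : RightMonoidalStruct C R)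

lemma sComp₂ {X X' X'' Y Y' Y'' : C} (f : X ⟶ X') (f' : X' ⟶ X'') (g : Y ⟶ Y') (g' : Y' ⟶ Y'') :
    S.smpHom f g ≫ S.smpHom f' g' = S.smpHom (f ≫ f') (g ≫ g') :=
  (S.smpHom_comp f f' g g').symm

lemma mu_natural {M M' : C} (f : M ⟶ M') :
    S.smpHom (𝟙 R) (S.smpHom (𝟙 R) f) ≫ S.μ M' = S.μ M ≫ S.smpHom (𝟙 R) f := by
  unfold RightMonoidalStruct.μ
  rw [← Category.assoc, S.γ_natural (𝟙 R) (𝟙 R) f]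
  simp only [Category.assoc, sComp₂, Category.id_comp, Category.comp_id, S.smpHom_id]

lemma eta_mu (N : C) : S.η (S.smp R N) ≫ S.μ N = 𝟙 (S.smp R N) := by
  unfold RightMonoidalStruct.μ
  rw [← Category.assoc, S.unit_triangle, sComp₂, Category.comp_id, S.unit_counit, S.smpHom_id]

lemma Teta_mu (N : C) : S.smpHom (𝟙 R) (S.η N) ≫ S.μ N = 𝟙 (S.smp R N) := by
  unfold RightMonoidalStruct.μ
  simpa only [Category.assoc] using S.mixed_triangle R N

lemma mu_eps : S.μ R ≫ S.ε R = S.smpHom (𝟙 R) (S.ε R) ≫ S.ε R := by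
  unfold RightMonoidalStruct.μ
  rw [Category.assoc, S.ε_natural (S.ε R), ← Category.assoc, S.counit_triangle]

lemma splitL {X X' X'' Y : C} (f : X ⟶ X') (f' : X' ⟶ X'') :
    S.smpHom (f ≫ f') (𝟙 Y) = S.smpHom f (𝟙 Y) ≫ S.smpHom f' (𝟙 Y) := by
  rw [sComp₂, Category.comp_id]

lemma splitR {X Y Y' Y'' : C} (g : Y ⟶ Y') (g' : Y' ⟶ Y'') :
    S.smpHom (𝟙 X) (g ≫ g') = S.smpHom (𝟙 X) g ≫ S.smpHom (𝟙 X) g' := by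
  rw [sComp₂, Category.comp_id]

lemma exchange {X X' Y Y' : C} (f : X ⟶ X') (g : Y ⟶ Y') :
    S.smpHom f (𝟙 Y) ≫ S.smpHom (𝟙 X') g = S.smpHom (𝟙 X) g ≫ S.smpHom f (𝟙 Y') := by
  rw [sComp₂, sComp₂]; simp

lemma mu_assoc (M : C) :
    S.smpHom (𝟙 R) (S.μ M) ≫ S.μ M = S.μ (S.smp R M) ≫ S.μ M := by
  have key : S.smpHom (𝟙 R) (S.ε R) ≫ S.ε R
      = S.γ R R R ≫ S.smpHom (S.ε R) (𝟙 R) ≫ S.ε R := by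
    rw [← S.counit_triangle R R, Category.assoc, ← S.ε_natural (S.ε R)]
  have h1 : S.smpHom (𝟙 R) (S.smpHom (S.ε R) (𝟙 M)) ≫ S.γ R R M
      = S.γ R (S.smp R R) M ≫ S.smpHom (S.smpHom (𝟙 R) (S.ε R)) (𝟙 M) :=
    S.γ_natural (𝟙 R) (S.ε R) (𝟙 M)
  have h2 : S.smpHom (S.ε R) (𝟙 (S.smp R M)) ≫ S.γ R R M
      = S.γ (S.smp R R) R M ≫ S.smpHom (S.smpHom (S.ε R) (𝟙 R)) (𝟙 M) := by
    have := S.γ_natural (S.ε R) (𝟙 R) (𝟙 M)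
    rwa [S.smpHom_id] at this
  unfold RightMonoidalStruct.μ
  rw [show S.smpHom (𝟙 R) (S.γ R R M ≫ S.smpHom (S.ε R) (𝟙 M))
      = S.smpHom (𝟙 R) (S.γ R R M) ≫ S.smpHom (𝟙 R) (S.smpHom (S.ε R) (𝟙 M))
      from splitR S _ _]
  slice_lhs 2 3 => rw [h1]
  slice_lhs 3 4 => rw [sComp₂, Category.comp_id]
  rw [key, splitL S, splitL S]
  slice_lhs 1 3 => rw [S.pentagon R R R M]
  slice_rhs 2 3 => rw [h2]
  simp only [Category.assoc]

end Aux

lemma mu_gamma (S : RightMonoidalStruct C R) (M N : C) :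
    S.μ (S.smp M N) ≫ S.γ R M N
      = S.smpHom (𝟙 R) (S.γ R M N) ≫ S.γ R (S.smp R M) N ≫ S.smpHom (S.μ M) (𝟙 N) := by
  have h : S.smpHom (S.ε R) (𝟙 (S.smp M N)) ≫ S.γ R M N
      = S.γ (S.smp R R) M N ≫ S.smpHom (S.smpHom (S.ε R) (𝟙 M)) (𝟙 N) := by
    have := S.γ_natural (S.ε R) (𝟙 M) (𝟙 N)
    rwa [S.smpHom_id] at this
  unfold RightMonoidalStruct.μ
  rw [splitL S]
  slice_lhs 2 3 => rw [h]
  slice_lhs 1 2 => rw [← S.pentagon R R M N]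
  simp only [Category.assoc]

section WAux

variable {S Sx : RightMonoidalStruct C R}
variable {w : ∀ M N : C, Sx.smp M (S.smp R N) ⟶ S.smp M N}

lemma nat1 (hw : GoodW S Sx w) {M M' : C} (f : M ⟶ M') (N : C) :
    Sx.smpHom f (𝟙 (S.smp R N)) ≫ w M' N = w M N ≫ S.smpHom f (𝟙 N) := by
  have h := hw.natural f (𝟙 N)
  rwa [S.smpHom_id] at h

lemma smpHom_isIso (S : RightMonoidalStruct C R) {X X' Y Y' : C} (f : X ⟶ X') (g : Y ⟶ Y')
    [IsIso f] [IsIso g] : IsIso (S.smpHom f g) :=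
  ⟨S.smpHom (inv f) (inv g),
    by rw [sComp₂, IsIso.hom_inv_id, IsIso.hom_inv_id, S.smpHom_id],
    by rw [sComp₂, IsIso.inv_hom_id, IsIso.inv_hom_id, S.smpHom_id]⟩

lemma claimB [∀ L M N : C, IsIso (Sx.γ L M N)] [∀ M : C, IsIso (Sx.η M)]
    [∀ M : C, IsIso (Sx.ε M)] (hw : GoodW S Sx w) (N : C) :
    S.smpHom (𝟙 R) (S.η N) ≫ S.γ R R N
        ≫ @inv _ _ _ _ (w (S.smp R R) N) (hw.iso (S.smp R R) N)
        ≫ Sx.smpHom (S.ε R) (𝟙 (S.smp R N))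
      = Sx.η (S.smp R N) := by
  haveI : ∀ M N : C, IsIso (w M N) := hw.iso
  -- E1 at L := R
  have E1 : Sx.smpHom (𝟙 R) (S.smpHom (𝟙 R) (S.η N) ≫ S.γ R R N
        ≫ inv (w (S.smp R R) N) ≫ Sx.smpHom (S.ε R) (𝟙 (S.smp R N)))
      ≫ Sx.γ R R (S.smp R N) ≫ Sx.smpHom (Sx.ε R) (𝟙 (S.smp R N))
      = 𝟙 (Sx.smp R (S.smp R N)) := by
    rw [← cancel_mono (w R N)]
    have key : Sx.smpHom (𝟙 R) (S.smpHom (𝟙 R) (S.η N))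
        ≫ (Sx.smpHom (𝟙 R) (S.γ R R N)
          ≫ Sx.smpHom (𝟙 R) (inv (w (S.smp R R) N))
          ≫ Sx.γ R (S.smp R R) (S.smp R N)
          ≫ w (Sx.smp R (S.smp R R)) N
          ≫ S.smpHom (w R R) (𝟙 N))
        ≫ S.smpHom (S.ε R) (𝟙 N)
        = w R N := by
      rw [hw.heptagon R R N]
      slice_lhs 1 2 => rw [hw.natural (𝟙 R) (S.η N)]
      slice_lhs 2 4 => rw [S.mixed_triangle R N]
      simp
    rw [Category.id_comp]
    conv_rhs => rw [← key]
    slice_rhs 6 7 => rw [sComp₂ S, hw.tetragon R, Category.comp_id, splitL S]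
    slice_rhs 5 6 => rw [← nat1 hw (Sx.smpHom (𝟙 R) (S.ε R)) N]
    slice_rhs 6 7 => rw [← nat1 hw (Sx.ε R) N]
    slice_rhs 4 5 => rw [← Sx.γ_natural (𝟙 R) (S.ε R) (𝟙 (S.smp R N))]
    rw [splitR Sx, splitR Sx, splitR Sx]
    simp only [Category.assoc]
  haveI : IsIso (Sx.smpHom (Sx.ε R) (𝟙 (S.smp R N))) :=
    smpHom_isIso Sx (Sx.ε R) (𝟙 (S.smp R N))
  have heq : Sx.smpHom (𝟙 R) (S.smpHom (𝟙 R) (S.η N) ≫ S.γ R R N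
        ≫ inv (w (S.smp R R) N) ≫ Sx.smpHom (S.ε R) (𝟙 (S.smp R N)))
      = Sx.smpHom (𝟙 R) (Sx.η (S.smp R N)) := by
    have h2 := E1.trans (Sx.mixed_triangle R (S.smp R N)).symm
    simp only [← Category.assoc] at h2
    rw [cancel_mono, cancel_mono] at h2
    simp only [Category.assoc] at h2
    exact h2
  have h3 := Sx.η_natural (S.smpHom (𝟙 R) (S.η N) ≫ S.γ R R N
      ≫ inv (w (S.smp R R) N) ≫ Sx.smpHom (S.ε R) (𝟙 (S.smp R N)))
  rw [heq, ← Sx.η_natural (Sx.η (S.smp R N))] at h3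
  rwa [cancel_mono] at h3

lemma claimA [∀ L M N : C, IsIso (Sx.γ L M N)] [∀ M : C, IsIso (Sx.η M)]
    [∀ M : C, IsIso (Sx.ε M)] (hw : GoodW S Sx w) (N : C) :
    Sx.η (S.smp R N) ≫ w R N = 𝟙 (S.smp R N) := by
  haveI : ∀ M N : C, IsIso (w M N) := hw.iso
  rw [← claimB hw N]
  slice_lhs 4 5 => rw [nat1 hw (S.ε R) N]
  slice_lhs 3 4 => rw [IsIso.inv_hom_id]
  simp only [Category.id_comp, Category.assoc]
  exact S.mixed_triangle R N

lemma muL [∀ L M N : C, IsIso (Sx.γ L M N)] [∀ M : C, IsIso (Sx.η M)]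
    [∀ M : C, IsIso (Sx.ε M)] (hw : GoodW S Sx w) (N : C) :
    S.γ R R N ≫ @inv _ _ _ _ (w (S.smp R R) N) (hw.iso (S.smp R R) N)
        ≫ Sx.smpHom (S.ε R) (𝟙 (S.smp R N))
      = S.μ N ≫ Sx.η (S.smp R N) := by
  haveI : ∀ M N : C, IsIso (w M N) := hw.iso
  rw [← cancel_mono (w R N)]
  slice_lhs 3 4 => rw [nat1 hw (S.ε R) N]
  slice_lhs 2 3 => rw [IsIso.inv_hom_id]
  slice_rhs 2 3 => rw [claimA hw N]
  simp only [Category.id_comp, Category.comp_id, Category.assoc]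
  rfl

lemma tau_eq [∀ L M N : C, IsIso (Sx.γ L M N)] [∀ M : C, IsIso (Sx.η M)]
    [∀ M : C, IsIso (Sx.ε M)] (hw : GoodW S Sx w) (L N : C) :
    w L (S.smp R N) ≫ S.γ L R N ≫ S.smpHom (S.ε L) (𝟙 N)
      = Sx.smpHom (𝟙 L) (S.μ N) ≫ w L N := by
  haveI : ∀ M N : C, IsIso (w M N) := hw.iso
  rw [← Category.assoc, ← hw.heptagon L R N]
  slice_lhs 5 6 => rw [sComp₂ S, hw.tetragon L, Category.comp_id, splitL S]
  slice_lhs 4 5 => rw [← nat1 hw (Sx.smpHom (𝟙 L) (S.ε R)) N]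
  slice_lhs 5 6 => rw [← nat1 hw (Sx.ε L) N]
  slice_lhs 3 4 => rw [← Sx.γ_natural (𝟙 L) (S.ε R) (𝟙 (S.smp R N))]
  slice_lhs 1 3 => rw [sComp₂ Sx, sComp₂ Sx]
  simp only [Category.assoc, Category.id_comp]
  rw [muL hw N, splitR Sx]
  slice_lhs 2 4 => rw [Sx.mixed_triangle L (S.smp R N)]
  rw [Category.id_comp]

lemma claimE [∀ L M N : C, IsIso (Sx.γ L M N)] [∀ M : C, IsIso (Sx.η M)]
    [∀ M : C, IsIso (Sx.ε M)] (hw : GoodW S Sx w) (L N : C) :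
    Sx.smpHom (𝟙 L) (S.η (S.smp R N)) ≫ w L (S.smp R N) ≫ S.γ L R N
        ≫ S.smpHom (S.ε L) (𝟙 N)
      = w L N := by
  rw [tau_eq hw L N, ← Category.assoc, sComp₂ Sx, eta_mu, Category.comp_id, Sx.smpHom_id,
    Category.id_comp]

end WAux
/-- Proposition 8.7 of Szlachányi.  Let `⊗` be an (ordinary)
monoidal structure and `⋆` a right-monoidal structure on the same category with
the same unit object `R`, and `T = ⟨R⋆-, μ, η⟩` the canonical monad of the
`⋆`-structure.  If there is a natural isomorphism `w_{M,N} : M ⊗ TN → M ⋆ N`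
satisfying the heptagon and tetragon equations, then
`T^{M,N} := w⁻¹_{TM,N} ∘ γ_{R,M,N} ∘ Tw_{M,N} ∘ T(M ⊗ η_N)` and `T⁰ := ε_R`
define a `⊗`-opmonoidal structure on the monad `T`, making `T` a `⊗`-bimonad. -/
theorem representing_w_makes_T_a_bimonad (S Sx : RightMonoidalStruct C R)
    [∀ L M N : C, IsIso (Sx.γ L M N)]
    [∀ M : C, IsIso (Sx.η M)]
    [∀ M : C, IsIso (Sx.ε M)]
    (w : ∀ M N : C, Sx.smp M (S.smp R N) ⟶ S.smp M N)
    (hw : GoodW S Sx w)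
    (T2 : ∀ M N : C,
      S.smp R (Sx.smp M N) ⟶ Sx.smp (S.smp R M) (S.smp R N))
    (hT2 : ∀ M N : C,
      T2 M N = S.smpHom (𝟙 R) (Sx.smpHom (𝟙 M) (S.η N))
        ≫ S.smpHom (𝟙 R) (w M N) ≫ S.γ R M N
        ≫ @inv _ _ _ _ (w (S.smp R M) N) (hw.iso (S.smp R M) N)) :
    -- monad laws for `T = ⟨R ⋆ -, μ, η⟩`
    (∀ {M M' : C} (f : M ⟶ M'),
        S.smpHom (𝟙 R) (S.smpHom (𝟙 R) f) ≫ S.μ M' = S.μ M ≫ S.smpHom (𝟙 R) f) ∧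
    (∀ M : C, S.smpHom (𝟙 R) (S.μ M) ≫ S.μ M = S.μ (S.smp R M) ≫ S.μ M) ∧
    (∀ N : C, S.η (S.smp R N) ≫ S.μ N = 𝟙 (S.smp R N)) ∧
    (∀ N : C, S.smpHom (𝟙 R) (S.η N) ≫ S.μ N = 𝟙 (S.smp R N)) ∧
    -- naturality of `T²`
    (∀ {M M' N N' : C} (f : M ⟶ M') (g : N ⟶ N'),
        S.smpHom (𝟙 R) (Sx.smpHom f g) ≫ T2 M' N'
          = T2 M N ≫ Sx.smpHom (S.smpHom (𝟙 R) f) (S.smpHom (𝟙 R) g)) ∧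
    -- (opmon1)
    (∀ L M N : C,
        T2 L (Sx.smp M N) ≫ Sx.smpHom (𝟙 (S.smp R L)) (T2 M N)
            ≫ Sx.γ (S.smp R L) (S.smp R M) (S.smp R N)
          = S.smpHom (𝟙 R) (Sx.γ L M N) ≫ T2 (Sx.smp L M) N
              ≫ Sx.smpHom (T2 L M) (𝟙 (S.smp R N))) ∧
    -- (opmon2)
    (∀ N : C,
        S.smpHom (𝟙 R) (Sx.η N) ≫ T2 R N ≫ Sx.smpHom (S.ε R) (𝟙 (S.smp R N))
          = Sx.η (S.smp R N)) ∧
    -- (opmon3)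
    (∀ M : C,
        T2 M R ≫ Sx.smpHom (𝟙 (S.smp R M)) (S.ε R) ≫ Sx.ε (S.smp R M)
          = S.smpHom (𝟙 R) (Sx.ε M)) ∧
    -- (opmon4)
    (∀ M N : C,
        S.smpHom (𝟙 R) (T2 M N) ≫ T2 (S.smp R M) (S.smp R N)
            ≫ Sx.smpHom (S.μ M) (S.μ N)
          = S.μ (Sx.smp M N) ≫ T2 M N) ∧
    -- (opmon5)
    (S.μ R ≫ S.ε R = S.smpHom (𝟙 R) (S.ε R) ≫ S.ε R) ∧
    -- (opmon6)
    (∀ M N : C,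
        S.η (Sx.smp M N) ≫ T2 M N = Sx.smpHom (S.η M) (S.η N)) ∧
    -- (opmon7)
    (S.η R ≫ S.ε R = 𝟙 R) := by
  haveI : ∀ M N : C, IsIso (w M N) := hw.iso
  have star : ∀ M N : C, T2 M N ≫ w (S.smp R M) N
      = S.smpHom (𝟙 R) (Sx.smpHom (𝟙 M) (S.η N)) ≫ S.smpHom (𝟙 R) (w M N) ≫ S.γ R M N := by
    intro M N
    rw [hT2]
    simp only [Category.assoc, IsIso.inv_hom_id, Category.comp_id]
  -- opmon6
  have o6 : ∀ M N : C, S.η (Sx.smp M N) ≫ T2 M N = Sx.smpHom (S.η M) (S.η N) := by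
    intro M N
    rw [← cancel_mono (w (S.smp R M) N), Category.assoc, star M N]
    slice_lhs 1 2 => rw [← S.η_natural (Sx.smpHom (𝟙 M) (S.η N))]
    slice_lhs 2 3 => rw [← S.η_natural (w M N)]
    slice_lhs 3 4 => rw [S.unit_triangle M N]
    rw [show Sx.smpHom (S.η M) (S.η N)
        = Sx.smpHom (𝟙 M) (S.η N) ≫ Sx.smpHom (S.η M) (𝟙 (S.smp R N)) from by
      rw [sComp₂ Sx, Category.id_comp, Category.comp_id]]
    slice_rhs 2 3 => rw [nat1 hw (S.η M) N]
  refine ⟨?_, mu_assoc S, eta_mu S, Teta_mu S, ?_, ?_, ?_, ?_, ?_, mu_eps S, o6, S.unit_counit⟩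
  · intro M M' f
    exact mu_natural S f
  · -- naturality of T2
    intro M M' N N' f g
    have swap : Sx.smpHom f g ≫ Sx.smpHom (𝟙 M') (S.η N')
        = Sx.smpHom (𝟙 M) (S.η N) ≫ Sx.smpHom f (S.smpHom (𝟙 R) g) := by
      rw [sComp₂ Sx, sComp₂ Sx, Category.comp_id, Category.id_comp, S.η_natural g]
    rw [← cancel_mono (w (S.smp R M') N')]
    simp only [Category.assoc]
    slice_rhs 2 3 => rw [hw.natural (S.smpHom (𝟙 R) f) g]
    slice_rhs 1 2 => rw [star M N]
    slice_rhs 3 4 => rw [← S.γ_natural (𝟙 R) f g]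
    slice_rhs 2 3 => rw [sComp₂ S, ← hw.natural f g]
    slice_lhs 2 3 => rw [star M' N']
    slice_lhs 1 2 => rw [sComp₂ S, swap]
    simp only [Category.id_comp, Category.assoc]
    rw [splitR S, splitR S]
    simp only [Category.assoc]
  · -- opmon1
    intro L M N
    have moveγ : ∀ {X Y : C} (x : X ⟶ Y),
        S.γ R L X ≫ S.smpHom (𝟙 (S.smp R L)) x
          = S.smpHom (𝟙 R) (S.smpHom (𝟙 L) x) ≫ S.γ R L Y := by
      intro X Y x
      have h := S.γ_natural (𝟙 R) (𝟙 L) x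
      rw [S.smpHom_id] at h
      exact h.symm
    have moveγ2 : ∀ {X Y : C} (x : X ⟶ Y),
        S.γ R X N ≫ S.smpHom (S.smpHom (𝟙 R) x) (𝟙 N)
          = S.smpHom (𝟙 R) (S.smpHom x (𝟙 N)) ≫ S.γ R Y N := by
      intro X Y x
      exact (S.γ_natural (𝟙 R) x (𝟙 N)).symm
    have claimF : Sx.smpHom (𝟙 L) (S.η (Sx.smp M N)) ≫ w L (Sx.smp M N)
          ≫ S.smpHom (𝟙 L) (Sx.smpHom (𝟙 M) (S.η N)) ≫ S.smpHom (𝟙 L) (w M N)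
          ≫ S.γ L M N
        = Sx.γ L M N ≫ Sx.smpHom (𝟙 (Sx.smp L M)) (S.η N) ≫ w (Sx.smp L M) N
          ≫ S.smpHom (Sx.smpHom (𝟙 L) (S.η M)) (𝟙 N) ≫ S.smpHom (w L M) (𝟙 N) := by
      slice_lhs 2 3 => rw [← hw.natural (𝟙 L) (Sx.smpHom (𝟙 M) (S.η N))]
      slice_lhs 3 4 => rw [← hw.natural (𝟙 L) (w M N)]
      slice_lhs 4 5 => rw [← hw.heptagon L M N]
      slice_lhs 1 5 => rw [sComp₂ Sx, sComp₂ Sx, sComp₂ Sx, sComp₂ Sx]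
      simp only [Category.assoc, Category.id_comp]
      rw [← hT2 M N, o6 M N]
      rw [show Sx.smpHom (S.η M) (S.η N)
          = Sx.smpHom (𝟙 M) (S.η N) ≫ Sx.smpHom (S.η M) (𝟙 (S.smp R N)) from by
        rw [sComp₂ Sx, Category.id_comp, Category.comp_id]]
      rw [splitR Sx]
      slice_lhs 2 3 => rw [Sx.γ_natural (𝟙 L) (S.η M) (𝟙 (S.smp R N))]
      slice_lhs 1 2 => rw [Sx.γ_natural (𝟙 L) (𝟙 M) (S.η N)]
      rw [Sx.smpHom_id L M]
      slice_rhs 3 4 => rw [← nat1 hw (Sx.smpHom (𝟙 L) (S.η M)) N]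
      simp only [Category.assoc]
    haveI : IsIso (S.smpHom (w (S.smp R L) M) (𝟙 N)) :=
      smpHom_isIso S (w (S.smp R L) M) (𝟙 N)
    rw [← cancel_mono (w (Sx.smp (S.smp R L) (S.smp R M)) N),
      ← cancel_mono (S.smpHom (w (S.smp R L) M) (𝟙 N))]
    simp only [Category.assoc]
    -- right-hand side
    slice_rhs 3 4 => rw [nat1 hw (T2 L M) N]
    slice_rhs 4 5 => rw [sComp₂ S, star L M]
    simp only [Category.comp_id, Category.assoc]
    rw [splitL S, splitL S]
    slice_rhs 2 3 => rw [star (Sx.smp L M) N]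
    slice_rhs 4 5 => rw [moveγ2]
    slice_rhs 5 6 => rw [moveγ2]
    slice_rhs 1 5 => rw [sComp₂ S, sComp₂ S, sComp₂ S, sComp₂ S]
    -- left-hand side
    rw [hT2 M N]
    rw [splitR Sx, splitR Sx, splitR Sx]
    simp only [Category.assoc]
    slice_lhs 4 8 => rw [hw.heptagon (S.smp R L) M N]
    slice_lhs 3 4 => rw [hw.natural (𝟙 (S.smp R L)) (w M N)]
    slice_lhs 2 3 => rw [hw.natural (𝟙 (S.smp R L)) (Sx.smpHom (𝟙 M) (S.η N))]
    slice_lhs 1 2 => rw [star L (Sx.smp M N)]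
    slice_lhs 3 4 => rw [moveγ]
    slice_lhs 4 5 => rw [moveγ]
    slice_lhs 5 6 => rw [← S.pentagon R L M N]
    slice_lhs 1 5 => rw [sComp₂ S, sComp₂ S, sComp₂ S, sComp₂ S]
    simp only [Category.assoc, Category.id_comp]
    rw [claimF]
  · -- opmon2
    intro N
    have inner : Sx.η N ≫ Sx.smpHom (𝟙 R) (S.η N) ≫ w R N = S.η N := by
      rw [← Category.assoc, ← Sx.η_natural (S.η N), Category.assoc, claimA hw N,
        Category.comp_id]
    rw [hT2 R N]
    slice_lhs 1 3 => rw [sComp₂ S, sComp₂ S]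
    simp only [Category.assoc, Category.id_comp]
    rw [inner]
    exact claimB hw N
  · -- opmon3
    intro M
    have inner : Sx.smpHom (𝟙 M) (S.η R) ≫ w M R ≫ S.ε M = Sx.ε M := by
      rw [hw.tetragon M, ← Category.assoc, sComp₂ Sx, S.unit_counit]
      simp only [Category.id_comp, Sx.smpHom_id]
    rw [hT2 M R]
    slice_lhs 5 6 => rw [← hw.tetragon (S.smp R M)]
    slice_lhs 4 5 => rw [IsIso.inv_hom_id]
    simp only [Category.id_comp, Category.assoc]
    slice_lhs 3 4 => rw [S.counit_triangle R M]
    slice_lhs 1 3 => rw [sComp₂ S, sComp₂ S]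
    simp only [Category.assoc, Category.id_comp]
    rw [inner]
  · -- opmon4
    intro M N
    rw [← cancel_mono (w (S.smp R M) N)]
    simp only [Category.assoc]
    slice_rhs 2 3 => rw [star M N]
    slice_rhs 1 2 => rw [← mu_natural S (Sx.smpHom (𝟙 M) (S.η N))]
    slice_rhs 2 3 => rw [← mu_natural S (w M N)]
    slice_rhs 3 4 => rw [mu_gamma S M N]
    rw [hT2 (S.smp R M) (S.smp R N)]
    rw [show Sx.smpHom (S.μ M) (S.μ N)
        = Sx.smpHom (𝟙 (S.smp R (S.smp R M))) (S.μ N)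
          ≫ Sx.smpHom (S.μ M) (𝟙 (S.smp R N)) from by
      rw [sComp₂ Sx, Category.id_comp, Category.comp_id]]
    simp only [Category.assoc]
    slice_lhs 7 8 => rw [nat1 hw (S.μ M) N]
    slice_lhs 6 7 => rw [← tau_eq hw (S.smp R (S.smp R M)) N]
    slice_lhs 5 6 => rw [IsIso.inv_hom_id]
    simp only [Category.id_comp, Category.assoc]
    slice_lhs 4 5 => rw [← S.pentagon R (S.smp R M) R N]
    slice_lhs 6 7 => rw [sComp₂ S, S.counit_triangle R (S.smp R M)]
    simp only [Category.comp_id, Category.assoc]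
    slice_lhs 5 6 => rw [← S.γ_natural (𝟙 R) (S.ε (S.smp R M)) (𝟙 N)]
    slice_lhs 2 5 => rw [sComp₂ S, sComp₂ S, sComp₂ S]
    simp only [Category.assoc, Category.id_comp]
    rw [claimE hw (S.smp R M) N]
    slice_lhs 1 2 => rw [sComp₂ S]
    simp only [Category.id_comp]
    rw [star M N, splitR S, splitR S]
    simp only [Category.assoc]
end

section
/- (Corepresentability Theorem.) Let 𝓔 be a category equipped with a right-monoidal structure ⟨⋆, R, γ, η, ε⟩ and an ordinary monoidal structure ⊗ with the same unit object R (associator α, invertible unit maps ℓ, r), and let Q = ⟨−⋆R, δ, ε⟩ be the canonical comonad of the ⋆-structure. Then the following are equivalent: (i) the ⋆-structure is ⊗-corepresentable, i.e., there exist a ⊗-monoidal comonad ⟨C, Δ, ϵ, C₂, C₀⟩ and a twist isomorphism M⋆N ≅ N⊗CM from the ⋆-structure to the right-monoidal structure M⊙N := N⊗CM it induces; (ii) there exists a natural isomorphism w_{M,N} : N⋆M → M⊗QN satisfying the heptagon w_{L,N⋆M}∘γ_{N,M,L} = (L⊗γ_{N,M,R})∘(L⊗w⁻¹_{QM,N})∘α⁻¹_{L,QM,QN}∘w_{L⊗QM,N}∘(N⋆w_{L,M})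 and the tetragon w_{M,R}∘η_M = (M⊗η_R)∘r⁻¹_M; (iii) there exists a tetrahedral isomorphism t_{L,M,N} : N⋆(L⊗M) → L⊗(N⋆M). -/
/-!
The monoidal structure `⊗` is encoded as a right-monoidal structure `Sx` whose structure maps
are invertible: `Sx.γ = α`, `Sx.η = ℓ⁻¹`, `Sx.ε = r`.

(ii) ⇒ (iii): conjugating the associator by `w` gives the tetrahedral map
`t_{L,M,N} := (L ⊗ w⁻¹_{M,N}) ∘ α⁻¹_{L,M,QN} ∘ w_{L⊗M,N}`; its first pentagon comes from the
pentagon of `⊗`, its second one from the heptagon, and its counit law from the tetragon.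

(iii) ⇒ (ii): for `w := wOfCo t`, the first pentagon of `t` at `M = R` expresses `t_{L,QM,N}`
through `w`, and this turns the second pentagon of `t` into the heptagon.

(ii) ⇒ (i): the round trip through (iii) replaces `w` by one with `w_{R,N} = ℓ⁻¹_{QN}`. For such
a `w`, the heptagon at `M = R` gives `(M ⊗ δ_L) ∘ w_{M,L} = w_{M,QL} ∘ γ_{L,R,M} ∘ (L ⋆ η_M)`,
and with it the canonical comonad `Q = - ⋆ R` becomes `⊗`-monoidal for
`C₂ := Q φ_{M,N} ∘ γ_{N,M,R} ∘ w⁻¹_{QM,N}` and `C₀ := η_R`, where `φ_{M,N} := (M ⊗ ε_N) ∘ w_{M,N}`;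
then `w⁻¹` is a twist.

(i) ⇒ (ii): `u_N := v_{N,R} ∘ ℓ⁻¹_{CN} : CN → QN` is invertible, and
`w_{M,N} := (M ⊗ u_N) ∘ v⁻¹_{N,M}` satisfies the heptagon: it is the hexagon of `v`, rewritten
with the special case of the hexagon at the unit, which computes `u_{N ⋆ M}`.
-/

open CategoryTheory

universe v u

variable {C : Type u} [Category.{v} C] {R : C}

/-- A monoidal comonad `⟨C, Δ, ϵ, C₂, C₀⟩` on the monoidal structure `Sx`
(a right-monoidal structure with invertible comparison maps): a comonad with a
lax monoidal structure for which comultiplication and counit are monoidal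
natural transformations. -/
structure MonoidalComonadStr (Sx : RightMonoidalStruct C R) where
  obj : C → C
  map : ∀ {X Y : C}, (X ⟶ Y) → (obj X ⟶ obj Y)
  map_id : ∀ X : C, map (𝟙 X) = 𝟙 (obj X)
  map_comp : ∀ {X Y Z : C} (f : X ⟶ Y) (g : Y ⟶ Z), map (f ≫ g) = map f ≫ map g
  Δc : ∀ X : C, obj X ⟶ obj (obj X)
  εc : ∀ X : C, obj X ⟶ X
  Δc_natural : ∀ {X Y : C} (f : X ⟶ Y), map f ≫ Δc Y = Δc X ≫ map (map f)
  εc_natural : ∀ {X Y : C} (f : X ⟶ Y), map f ≫ εc Y = εc X ≫ f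
  coassoc : ∀ X : C, Δc X ≫ map (Δc X) = Δc X ≫ Δc (obj X)
  counit_left : ∀ X : C, Δc X ≫ εc (obj X) = 𝟙 (obj X)
  counit_right : ∀ X : C, Δc X ≫ map (εc X) = 𝟙 (obj X)
  C2 : ∀ M N : C, Sx.smp (obj M) (obj N) ⟶ obj (Sx.smp M N)
  C0 : R ⟶ obj R
  C2_natural : ∀ {M M' N N' : C} (f : M ⟶ M') (g : N ⟶ N'),
      Sx.smpHom (map f) (map g) ≫ C2 M' N' = C2 M N ≫ map (Sx.smpHom f g)
  lax_assoc : ∀ L M N : C,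
      Sx.smpHom (𝟙 (obj L)) (C2 M N) ≫ C2 L (Sx.smp M N) ≫ map (Sx.γ L M N)
        = Sx.γ (obj L) (obj M) (obj N) ≫ Sx.smpHom (C2 L M) (𝟙 (obj N))
            ≫ C2 (Sx.smp L M) N
  lax_unit : ∀ X : C,
      Sx.η (obj X) ≫ Sx.smpHom C0 (𝟙 (obj X)) ≫ C2 R X = map (Sx.η X)
  lax_counit : ∀ X : C,
      Sx.smpHom (𝟙 (obj X)) C0 ≫ C2 X R ≫ map (Sx.ε X) = Sx.ε (obj X)
  Δc_monoidal : ∀ M N : C,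
      C2 M N ≫ Δc (Sx.smp M N)
        = Sx.smpHom (Δc M) (Δc N) ≫ C2 (obj M) (obj N) ≫ map (C2 M N)
  Δc_monoidal_unit : C0 ≫ Δc R = C0 ≫ map C0
  εc_monoidal : ∀ M N : C,
      C2 M N ≫ εc (Sx.smp M N) = Sx.smpHom (εc M) (εc N)
  εc_monoidal_unit : C0 ≫ εc R = 𝟙 R

section
variable (S Sx : RightMonoidalStruct C R)
  [∀ L M N : C, IsIso (Sx.γ L M N)]
  [∀ M : C, IsIso (Sx.η M)]
  [∀ M : C, IsIso (Sx.ε M)]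

/-- The Prop stating that `v` is a twist isomorphism from the `⋆`-structure `S`
to the right-monoidal structure `M ⊙ N := N ⊗ CM` induced by a `⊗`-monoidal
comonad `Co`. -/
structure CoTwist (Co : MonoidalComonadStr Sx)
    (v : ∀ M N : C, Sx.smp N (Co.obj M) ⟶ S.smp M N) : Prop where
  natural : ∀ {M M' N N' : C} (f : M ⟶ M') (g : N ⟶ N'),
      Sx.smpHom g (Co.map f) ≫ v M' N' = v M N ≫ S.smpHom f g
  iso : ∀ M N : C, IsIso (v M N)
  hexagon : ∀ L M N : C,
      (inv (Sx.γ N (Co.obj M) (Co.obj L))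
          ≫ Sx.smpHom (𝟙 N) (Sx.smpHom (𝟙 (Co.obj M)) (Co.Δc L))
          ≫ Sx.smpHom (𝟙 N) (Co.C2 M (Co.obj L)))
          ≫ Sx.smpHom (𝟙 N) (Co.map (v L M)) ≫ v (S.smp L M) N
        = Sx.smpHom (v M N) (Co.map (𝟙 L)) ≫ v L (S.smp M N) ≫ S.γ L M N
  unit : ∀ N : C,
      (inv (Sx.ε N) ≫ Sx.smpHom (𝟙 N) Co.C0) ≫ v R N = S.η N
  counit : ∀ M : C,
      v M R ≫ S.ε M = inv (Sx.η (Co.obj M)) ≫ Co.εc M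

/-- A natural isomorphism `w_{M,N} : N ⋆ M → M ⊗ QN` (where `Q = - ⋆ R` is the
canonical comonad of the `⋆`-structure) satisfying the heptagon and tetragon
equations of the Corepresentability Theorem. -/
structure GoodWco (w : ∀ M N : C, S.smp N M ⟶ Sx.smp M (S.smp N R)) : Prop where
  natural : ∀ {M M' N N' : C} (f : M ⟶ M') (g : N ⟶ N'),
      S.smpHom g f ≫ w M' N' = w M N ≫ Sx.smpHom f (S.smpHom g (𝟙 R))
  iso : ∀ M N : C, IsIso (w M N)
  heptagon : ∀ L M N : C,
      S.γ N M L ≫ w L (S.smp N M)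
        = S.smpHom (𝟙 N) (w L M)
            ≫ w (Sx.smp L (S.smp M R)) N
            ≫ inv (Sx.γ L (S.smp M R) (S.smp N R))
            ≫ Sx.smpHom (𝟙 L) (@inv _ _ _ _ (w (S.smp M R) N) (iso (S.smp M R) N))
            ≫ Sx.smpHom (𝟙 L) (S.γ N M R)
  tetragon : ∀ M : C,
      S.η M ≫ w M R = inv (Sx.ε M) ≫ Sx.smpHom (𝟙 M) (S.η R)

/-- A tetrahedral homomorphism `t_{L,M,N} : N ⋆ (L ⊗ M) → L ⊗ (N ⋆ M)` for the
corepresentability setting. -/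
structure CoTetraHom
    (t : ∀ L M N : C, S.smp N (Sx.smp L M) ⟶ Sx.smp L (S.smp N M)) : Prop where
  natural : ∀ {L L' M M' N N' : C} (f : L ⟶ L') (g : M ⟶ M') (h : N ⟶ N'),
      S.smpHom h (Sx.smpHom f g) ≫ t L' M' N' = t L M N ≫ Sx.smpHom f (S.smpHom h g)
  pentagon₁ : ∀ K L M N : C,
      S.smpHom (𝟙 N) (inv (Sx.γ K L M)) ≫ t K (Sx.smp L M) N
          ≫ Sx.smpHom (𝟙 K) (t L M N)
        = t (Sx.smp K L) M N ≫ inv (Sx.γ K L (S.smp N M))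
  pentagon₂ : ∀ K L M N : C,
      S.smpHom (𝟙 N) (t K L M) ≫ t K (S.smp M L) N
          ≫ Sx.smpHom (𝟙 K) (S.γ N M L)
        = S.γ N M (Sx.smp K L) ≫ t K L (S.smp N M)
  unit : ∀ M N : C,
      t R M N ≫ inv (Sx.η (S.smp N M)) = S.smpHom (𝟙 N) (inv (Sx.η M))
  counit : ∀ M N : C,
      S.η (Sx.smp M N) ≫ t M N R = Sx.smpHom (𝟙 M) (S.η N)

/-- The comparison `w_{M,N} := t_{M,R,N} ∘ (N ⋆ r⁻¹_M) : N ⋆ M → M ⊗ QN`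
associated to a tetrahedral homomorphism. -/
noncomputable def wOfCo (t : ∀ L M N : C, S.smp N (Sx.smp L M) ⟶ Sx.smp L (S.smp N M))
    (M N : C) : S.smp N M ⟶ Sx.smp M (S.smp N R) :=
  S.smpHom (𝟙 N) (inv (Sx.ε M)) ≫ t M R N

end

namespace RightMonoidalStruct

variable (T : RightMonoidalStruct C R)

instance isIso_smpHom {X X' Y Y' : C} (f : X ⟶ X') (g : Y ⟶ Y') [IsIso f] [IsIso g] :
    IsIso (T.smpHom f g) :=
  ⟨T.smpHom (inv f) (inv g), by simp [← T.smpHom_comp, T.smpHom_id],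
    by simp [← T.smpHom_comp, T.smpHom_id]⟩

lemma inv_smpHom {X X' Y Y' : C} (f : X ⟶ X') (g : Y ⟶ Y') [IsIso f] [IsIso g] :
    inv (T.smpHom f g) = T.smpHom (inv f) (inv g) :=
  IsIso.inv_eq_of_hom_inv_id (by simp [← T.smpHom_comp, T.smpHom_id])

lemma inv_smpHom_id {X X' Y : C} (f : X ⟶ X') [IsIso f] :
    inv (T.smpHom f (𝟙 Y)) = T.smpHom (inv f) (𝟙 Y) := by
  rw [inv_smpHom, IsIso.inv_id]

lemma inv_id_smpHom {X Y Y' : C} (g : Y ⟶ Y') [IsIso g] :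
    inv (T.smpHom (𝟙 X) g) = T.smpHom (𝟙 X) (inv g) := by
  rw [inv_smpHom, IsIso.inv_id]

lemma id_smpHom_comp {K X Y Z : C} (a : X ⟶ Y) (b : Y ⟶ Z) :
    T.smpHom (𝟙 K) (a ≫ b) = T.smpHom (𝟙 K) a ≫ T.smpHom (𝟙 K) b := by
  rw [← T.smpHom_comp, Category.comp_id]

lemma comp_smpHom_id {K X Y Z : C} (a : X ⟶ Y) (b : Y ⟶ Z) :
    T.smpHom (a ≫ b) (𝟙 K) = T.smpHom a (𝟙 K) ≫ T.smpHom b (𝟙 K) := by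
  rw [← T.smpHom_comp, Category.comp_id]

lemma smpHom_id_comp_id_smpHom {X Y K B : C} (a : X ⟶ Y) (b : K ⟶ B) :
    T.smpHom a (𝟙 K) ≫ T.smpHom (𝟙 Y) b = T.smpHom a b := by
  rw [← T.smpHom_comp, Category.comp_id, Category.id_comp]

lemma δ_ε (M : C) : T.δ M ≫ T.ε (T.smp M R) = 𝟙 _ := by
  rw [δ, Category.assoc, T.counit_triangle, ← T.smpHom_comp, Category.id_comp, T.unit_counit,
    T.smpHom_id]

lemma δ_smpHom_ε (M : C) : T.δ M ≫ T.smpHom (T.ε M) (𝟙 R) = 𝟙 _ := by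
  rw [δ, Category.assoc, T.mixed_triangle]

lemma δ_naturality {M M' : C} (f : M ⟶ M') :
    T.smpHom f (𝟙 R) ≫ T.δ M' = T.δ M ≫ T.smpHom (T.smpHom f (𝟙 R)) (𝟙 R) := by
  have h := T.γ_natural f (𝟙 R) (𝟙 R)
  rw [T.smpHom_id] at h
  rw [δ, δ, ← reassoc_of% T.smpHom_comp, Category.assoc, ← h, ← reassoc_of% T.smpHom_comp]
  simp

lemma δ_smpHom_δ (M : C) : T.δ M ≫ T.smpHom (T.δ M) (𝟙 R) = T.δ M ≫ T.δ (T.smp M R) := by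
  have hη : T.η R ≫ T.smpHom (T.η R) (𝟙 R) = T.η R ≫ T.smpHom (𝟙 R) (T.η R) ≫ T.γ R R R := by
    rw [← T.unit_triangle R R, ← reassoc_of% T.η_natural (T.η R)]
  have hγ := T.γ_natural (𝟙 M) (T.η R) (𝟙 R)
  have hγ' := T.γ_natural (𝟙 M) (𝟙 R) (T.η R)
  rw [T.smpHom_id] at hγ'
  simp only [δ, Category.assoc]
  rw [comp_smpHom_id, ← reassoc_of% hγ, ← reassoc_of% id_smpHom_comp, hη, id_smpHom_comp,
    id_smpHom_comp, Category.assoc, Category.assoc, T.pentagon, reassoc_of% hγ']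

lemma η_δ : T.η R ≫ T.δ R = T.η R ≫ T.smpHom (T.η R) (𝟙 R) := by
  rw [δ, ← reassoc_of% T.η_natural (T.η R), T.unit_triangle]

lemma γ_δ (N M : C) :
    T.γ N M R ≫ T.δ (T.smp N M)
      = T.smpHom (𝟙 N) (T.δ M) ≫ T.γ N (T.smp M R) R ≫ T.smpHom (T.γ N M R) (𝟙 R) := by
  have h := T.γ_natural (𝟙 N) (𝟙 M) (T.η R)
  rw [T.smpHom_id] at h
  rw [δ, δ, ← reassoc_of% h, ← T.pentagon N M R R, id_smpHom_comp, Category.assoc]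

lemma inv_γ_naturality [∀ L M N : C, IsIso (T.γ L M N)] {L L' M M' N N' : C} (f : L ⟶ L')
    (g : M ⟶ M') (h : N ⟶ N') :
    T.smpHom (T.smpHom f g) h ≫ inv (T.γ L' M' N')
      = inv (T.γ L M N) ≫ T.smpHom f (T.smpHom g h) := by
  rw [IsIso.comp_inv_eq, Category.assoc, IsIso.eq_inv_comp, ← T.γ_natural]

lemma pentagon_inv [∀ L M N : C, IsIso (T.γ L M N)] (K L M X : C) :
    T.smpHom (inv (T.γ K L M)) (𝟙 X) ≫ inv (T.γ K (T.smp L M) X)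
      = inv (T.γ (T.smp K L) M X) ≫ inv (T.γ K L (T.smp M X)) ≫ T.smpHom (𝟙 K) (T.γ L M X) := by
  have h : T.γ K (T.smp L M) X ≫ T.smpHom (T.γ K L M) (𝟙 X)
      = T.smpHom (𝟙 K) (inv (T.γ L M X)) ≫ T.γ K L (T.smp M X) ≫ T.γ (T.smp K L) M X := by
    rw [← T.pentagon, ← reassoc_of% id_smpHom_comp, IsIso.inv_hom_id, T.smpHom_id,
      Category.id_comp]
  rw [← inv_smpHom_id, ← IsIso.inv_comp]
  refine IsIso.inv_eq_of_hom_inv_id ?_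
  rw [h]
  simp [← id_smpHom_comp, T.smpHom_id]

lemma smpHom_inv_ε_inv_γ [∀ L M N : C, IsIso (T.γ L M N)] [∀ M : C, IsIso (T.ε M)] (M X : C) :
    T.smpHom (inv (T.ε M)) (𝟙 X) ≫ inv (T.γ M R X) = T.smpHom (𝟙 M) (T.η X) := by
  rw [← inv_smpHom_id, ← IsIso.inv_comp]
  exact IsIso.inv_eq_of_inv_hom_id (T.mixed_triangle M X)

lemma smpHom_inv_η_η [∀ L M N : C, IsIso (T.γ L M N)] [∀ M : C, IsIso (T.η M)] (X Y : C) :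
    T.smpHom (inv (T.η X)) (𝟙 Y) ≫ T.η (T.smp X Y) = inv (T.γ R X Y) := by
  rw [← inv_smpHom_id, IsIso.inv_comp_eq, IsIso.eq_comp_inv]
  exact T.unit_triangle X Y

lemma inv_ε_inv_γ [∀ L M N : C, IsIso (T.γ L M N)] [∀ M : C, IsIso (T.ε M)] (M N : C) :
    inv (T.ε (T.smp M N)) ≫ inv (T.γ M N R) = T.smpHom (𝟙 M) (inv (T.ε N)) := by
  rw [← IsIso.inv_comp, ← inv_id_smpHom]
  simp only [T.counit_triangle]

lemma inv_ε_unit [∀ M : C, IsIso (T.ε M)] : inv (T.ε R) = T.η R :=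
  IsIso.inv_eq_of_inv_hom_id T.unit_counit

end RightMonoidalStruct

open RightMonoidalStruct

namespace GoodWco

variable {S Sx : RightMonoidalStruct C R} [∀ L M N : C, IsIso (Sx.γ L M N)]
  [∀ M : C, IsIso (Sx.ε M)] {w : ∀ M N : C, S.smp N M ⟶ Sx.smp M (S.smp N R)}
  (hw : GoodWco S Sx w)

noncomputable def winv (M N : C) : Sx.smp M (S.smp N R) ⟶ S.smp N M :=
  @inv _ _ _ _ (w M N) (hw.iso M N)

lemma isIso_winv (M N : C) : IsIso (hw.winv M N) :=
  @IsIso.inv_isIso _ _ _ _ _ (hw.iso M N)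

lemma hom_winv (M N : C) : w M N ≫ hw.winv M N = 𝟙 _ :=
  @IsIso.hom_inv_id _ _ _ _ _ (hw.iso M N)

lemma winv_hom (M N : C) : hw.winv M N ≫ w M N = 𝟙 _ :=
  @IsIso.inv_hom_id _ _ _ _ _ (hw.iso M N)

lemma hom_winv_assoc (M N : C) {Z : C} (h : S.smp N M ⟶ Z) : w M N ≫ hw.winv M N ≫ h = h := by
  rw [← Category.assoc, hom_winv, Category.id_comp]

lemma winv_hom_assoc (M N : C) {Z : C} (h : Sx.smp M (S.smp N R) ⟶ Z) :
    hw.winv M N ≫ w M N ≫ h = h := by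
  rw [← Category.assoc, winv_hom, Category.id_comp]

lemma winv_naturality {M M' N N' : C} (f : M ⟶ M') (g : N ⟶ N') :
    Sx.smpHom f (S.smpHom g (𝟙 R)) ≫ hw.winv M' N' = hw.winv M N ≫ S.smpHom g f := by
  have := hw.iso M N
  rw [← cancel_epi (w M N), hom_winv_assoc, ← reassoc_of% hw.natural f g, hom_winv,
    Category.comp_id]

lemma naturality_fst (hw : GoodWco S Sx w) {M M' : C} (f : M ⟶ M') (N : C) :
    S.smpHom (𝟙 N) f ≫ w M' N = w M N ≫ Sx.smpHom f (𝟙 (S.smp N R)) := by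
  simpa only [S.smpHom_id] using hw.natural f (𝟙 N)

lemma winv_naturality_fst {M M' : C} (f : M ⟶ M') (N : C) :
    Sx.smpHom f (𝟙 (S.smp N R)) ≫ hw.winv M' N = hw.winv M N ≫ S.smpHom (𝟙 N) f := by
  simpa only [S.smpHom_id] using hw.winv_naturality f (𝟙 N)

lemma γ_w (L M N : C) :
    S.γ N M L ≫ w L (S.smp N M)
      = S.smpHom (𝟙 N) (w L M) ≫ w (Sx.smp L (S.smp M R)) N
          ≫ inv (Sx.γ L (S.smp M R) (S.smp N R))
          ≫ Sx.smpHom (𝟙 L) (hw.winv (S.smp M R) N) ≫ Sx.smpHom (𝟙 L) (S.γ N M R) :=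
  hw.heptagon L M N

lemma heptagon_winv (L M N : C) :
    Sx.smpHom (𝟙 L) (hw.winv (S.smp M R) N ≫ S.γ N M R)
      = Sx.γ L (S.smp M R) (S.smp N R) ≫ hw.winv (Sx.smp L (S.smp M R)) N
          ≫ S.smpHom (𝟙 N) (hw.winv L M) ≫ S.γ N M L ≫ w L (S.smp N M) := by
  rw [id_smpHom_comp, γ_w, ← reassoc_of% S.id_smpHom_comp, winv_hom, S.smpHom_id,
    Category.id_comp, winv_hom_assoc, IsIso.hom_inv_id_assoc]

lemma smpHom_η_winv (M : C) : Sx.smpHom (𝟙 M) (S.η R) ≫ hw.winv M R = Sx.ε M ≫ S.η M := by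
  rw [← cancel_epi (inv (Sx.ε M)), IsIso.inv_hom_id_assoc, ← reassoc_of% hw.tetragon, hom_winv,
    Category.comp_id]

noncomputable def tetra (L M N : C) : S.smp N (Sx.smp L M) ⟶ Sx.smp L (S.smp N M) :=
  w (Sx.smp L M) N ≫ inv (Sx.γ L M (S.smp N R)) ≫ Sx.smpHom (𝟙 L) (hw.winv M N)

lemma tetra_naturality {L L' M M' N N' : C} (f : L ⟶ L') (g : M ⟶ M') (h : N ⟶ N') :
    S.smpHom h (Sx.smpHom f g) ≫ hw.tetra L' M' N'
      = hw.tetra L M N ≫ Sx.smpHom f (S.smpHom h g) := by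
  have hwinv : Sx.smpHom f (Sx.smpHom g (S.smpHom h (𝟙 R))) ≫ Sx.smpHom (𝟙 L') (hw.winv M' N')
      = Sx.smpHom (𝟙 L) (hw.winv M N) ≫ Sx.smpHom f (S.smpHom h g) := by
    rw [← Sx.smpHom_comp, ← Sx.smpHom_comp, Category.comp_id, Category.id_comp, winv_naturality]
  rw [tetra, tetra, reassoc_of% (hw.natural (Sx.smpHom f g) h),
    reassoc_of% (Sx.inv_γ_naturality f g (S.smpHom h (𝟙 R))), hwinv, Category.assoc,
    Category.assoc]

lemma tetra_pentagon₁ (K L M N : C) :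
    S.smpHom (𝟙 N) (inv (Sx.γ K L M)) ≫ hw.tetra K (Sx.smp L M) N
        ≫ Sx.smpHom (𝟙 K) (hw.tetra L M N)
      = hw.tetra (Sx.smp K L) M N ≫ inv (Sx.γ K L (S.smp N M)) := by
  have hα := Sx.inv_γ_naturality (𝟙 K) (𝟙 L) (hw.winv M N)
  rw [Sx.smpHom_id] at hα
  simp only [tetra, id_smpHom_comp, Category.assoc]
  rw [reassoc_of% hw.naturality_fst, ← reassoc_of% Sx.id_smpHom_comp, winv_hom, Sx.smpHom_id,
    Category.id_comp, reassoc_of% (Sx.pentagon_inv K L M (S.smp N R)),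
    ← reassoc_of% Sx.id_smpHom_comp, IsIso.hom_inv_id, Sx.smpHom_id, Category.id_comp, hα]

lemma tetra_pentagon₂ (K L M N : C) :
    S.smpHom (𝟙 N) (hw.tetra K L M) ≫ hw.tetra K (S.smp M L) N ≫ Sx.smpHom (𝟙 K) (S.γ N M L)
      = S.γ N M (Sx.smp K L) ≫ hw.tetra K L (S.smp N M) := by
  have hhept : Sx.γ L (S.smp M R) (S.smp N R)
        ≫ Sx.smpHom (hw.winv L M) (𝟙 (S.smp N R)) ≫ hw.winv (S.smp M L) N ≫ S.γ N M L
      = Sx.smpHom (𝟙 L) (hw.winv (S.smp M R) N ≫ S.γ N M R) ≫ hw.winv L (S.smp N M) := by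
    rw [reassoc_of% hw.winv_naturality_fst, hw.heptagon_winv]
    simp only [Category.assoc]
    rw [hom_winv, Category.comp_id]
  have hα := Sx.inv_γ_naturality (𝟙 K) (hw.winv L M) (𝟙 (S.smp N R))
  have hα' := Sx.inv_γ_naturality (𝟙 K) (𝟙 L) (hw.winv (S.smp M R) N ≫ S.γ N M R)
  rw [Sx.smpHom_id] at hα'
  simp only [tetra, Category.assoc]
  rw [reassoc_of% hw.naturality_fst, comp_smpHom_id, comp_smpHom_id]
  simp only [Category.assoc]
  rw [reassoc_of% hα, reassoc_of% (Sx.pentagon_inv K L (S.smp M R) (S.smp N R)),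
    ← id_smpHom_comp, ← id_smpHom_comp, ← id_smpHom_comp, hhept, id_smpHom_comp]
  conv_rhs => rw [reassoc_of% (hw.γ_w (Sx.smp K L) M N), reassoc_of% hw.naturality_fst,
    ← reassoc_of% Sx.id_smpHom_comp]
  rw [← reassoc_of% hα']

lemma tetra_unit [∀ M : C, IsIso (Sx.η M)] (M N : C) :
    hw.tetra R M N ≫ inv (Sx.η (S.smp N M)) = S.smpHom (𝟙 N) (inv (Sx.η M)) := by
  rw [tetra, ← Sx.smpHom_inv_η_η M (S.smp N R), Category.assoc, Category.assoc, Category.assoc,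
    ← reassoc_of% Sx.η_natural, ← reassoc_of% hw.naturality_fst, hom_winv_assoc, IsIso.hom_inv_id,
    Category.comp_id]

lemma tetra_counit (M N : C) :
    S.η (Sx.smp M N) ≫ hw.tetra M N R = Sx.smpHom (𝟙 M) (S.η N) := by
  have hα := Sx.inv_γ_naturality (𝟙 M) (𝟙 N) (S.η R)
  rw [Sx.smpHom_id] at hα
  have hN : inv (Sx.ε N) ≫ Sx.smpHom (𝟙 N) (S.η R) ≫ hw.winv N R = S.η N := by
    rw [smpHom_η_winv, IsIso.inv_hom_id_assoc]
  rw [tetra, reassoc_of% hw.tetragon (Sx.smp M N), reassoc_of% hα, reassoc_of% Sx.inv_ε_inv_γ,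
    ← id_smpHom_comp, ← id_smpHom_comp, hN]

lemma coTetraHom [∀ M : C, IsIso (Sx.η M)] : CoTetraHom S Sx hw.tetra :=
  ⟨hw.tetra_naturality, hw.tetra_pentagon₁, hw.tetra_pentagon₂, hw.tetra_unit, hw.tetra_counit⟩

lemma wOfCo_tetra (M N : C) :
    wOfCo S Sx hw.tetra M N = w M N ≫ Sx.smpHom (𝟙 M) (Sx.η (S.smp N R) ≫ hw.winv R N) := by
  rw [wOfCo, tetra, reassoc_of% hw.naturality_fst, reassoc_of% Sx.smpHom_inv_ε_inv_γ,
    ← id_smpHom_comp]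

lemma isIso_wOfCo_tetra [∀ M : C, IsIso (Sx.η M)] (M N : C) :
    IsIso (wOfCo S Sx hw.tetra M N) := by
  have := hw.iso M N
  have := hw.isIso_winv R N
  rw [wOfCo_tetra]
  infer_instance

end GoodWco

lemma smpHom_ε_wOfCo {S Sx : RightMonoidalStruct C R} [∀ M : C, IsIso (Sx.ε M)]
    (t : ∀ L M N : C, S.smp N (Sx.smp L M) ⟶ Sx.smp L (S.smp N M)) (M N : C) :
    S.smpHom (𝟙 N) (Sx.ε M) ≫ wOfCo S Sx t M N = t M R N := by
  rw [wOfCo, ← reassoc_of% S.id_smpHom_comp, IsIso.hom_inv_id, S.smpHom_id, Category.id_comp]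

namespace CoTetraHom

variable {S Sx : RightMonoidalStruct C R} [∀ L M N : C, IsIso (Sx.γ L M N)]
  [∀ M : C, IsIso (Sx.η M)] [∀ M : C, IsIso (Sx.ε M)]
  {t : ∀ L M N : C, S.smp N (Sx.smp L M) ⟶ Sx.smp L (S.smp N M)}

lemma wOfCo_naturality (ht : CoTetraHom S Sx t) {M M' N N' : C} (f : M ⟶ M') (g : N ⟶ N') :
    S.smpHom g f ≫ wOfCo S Sx t M' N' = wOfCo S Sx t M N ≫ Sx.smpHom f (S.smpHom g (𝟙 R)) := by
  have hr : f ≫ inv (Sx.ε M') = inv (Sx.ε M) ≫ Sx.smpHom f (𝟙 R) := by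
    rw [IsIso.eq_inv_comp, ← reassoc_of% Sx.ε_natural, IsIso.hom_inv_id, Category.comp_id]
  have hr' : S.smpHom g f ≫ S.smpHom (𝟙 N') (inv (Sx.ε M'))
      = S.smpHom (𝟙 N) (inv (Sx.ε M)) ≫ S.smpHom g (Sx.smpHom f (𝟙 R)) := by
    rw [← S.smpHom_comp, ← S.smpHom_comp, Category.comp_id, Category.id_comp, hr]
  rw [wOfCo, wOfCo, reassoc_of% hr', ht.natural, Category.assoc]

lemma tetra_wOfCo (ht : CoTetraHom S Sx t) (K L N : C) :
    t K L N ≫ Sx.smpHom (𝟙 K) (wOfCo S Sx t L N)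
      = wOfCo S Sx t (Sx.smp K L) N ≫ inv (Sx.γ K L (S.smp N R)) := by
  have hp := ht.pentagon₁ K L R N
  have hε : S.smpHom (𝟙 N) (inv (Sx.γ K L R)) ≫ S.smpHom (𝟙 N) (Sx.smpHom (𝟙 K) (Sx.ε L))
      = S.smpHom (𝟙 N) (Sx.ε (Sx.smp K L)) := by
    rw [← id_smpHom_comp, ← Sx.counit_triangle, IsIso.inv_hom_id_assoc]
  rw [← smpHom_ε_wOfCo t L N, ← smpHom_ε_wOfCo t (Sx.smp K L) N, id_smpHom_comp,
    ← reassoc_of% ht.natural (𝟙 K) (Sx.ε L) (𝟙 N), reassoc_of% hε, Category.assoc] at hp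
  exact (cancel_epi _).1 hp

lemma wOfCo_unit (ht : CoTetraHom S Sx t) (N : C) : wOfCo S Sx t R N = Sx.η (S.smp N R) := by
  have ht' : t R R N = S.smpHom (𝟙 N) (inv (Sx.η R)) ≫ Sx.η (S.smp N R) := by
    rw [← ht.unit R N, Category.assoc, IsIso.inv_hom_id, Category.comp_id]
  rw [wOfCo, ht', ← reassoc_of% S.id_smpHom_comp, Sx.inv_ε_unit, IsIso.hom_inv_id, S.smpHom_id,
    Category.id_comp]

lemma wOfCo_tetragon (ht : CoTetraHom S Sx t) (M : C) :
    S.η M ≫ wOfCo S Sx t M R = inv (Sx.ε M) ≫ Sx.smpHom (𝟙 M) (S.η R) := by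
  rw [wOfCo, ← reassoc_of% S.η_natural, ht.counit M R]

lemma wOfCo_heptagon (ht : CoTetraHom S Sx t) (hio : ∀ M N : C, IsIso (wOfCo S Sx t M N))
    (L M N : C) :
    S.γ N M L ≫ wOfCo S Sx t L (S.smp N M)
      = S.smpHom (𝟙 N) (wOfCo S Sx t L M) ≫ wOfCo S Sx t (Sx.smp L (S.smp M R)) N
          ≫ inv (Sx.γ L (S.smp M R) (S.smp N R))
          ≫ Sx.smpHom (𝟙 L) (@inv _ _ _ _ (wOfCo S Sx t (S.smp M R) N) (hio (S.smp M R) N))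
          ≫ Sx.smpHom (𝟙 L) (S.γ N M R) := by
  have ht' : t L (S.smp M R) N = wOfCo S Sx t (Sx.smp L (S.smp M R)) N
      ≫ inv (Sx.γ L (S.smp M R) (S.smp N R))
      ≫ Sx.smpHom (𝟙 L) (inv (wOfCo S Sx t (S.smp M R) N)) := by
    rw [← reassoc_of% ht.tetra_wOfCo, ← id_smpHom_comp, IsIso.hom_inv_id, Sx.smpHom_id,
      Category.comp_id]
  have hγ := S.γ_natural (𝟙 N) (𝟙 M) (inv (Sx.ε L))
  rw [S.smpHom_id] at hγ
  conv_rhs => rw [← reassoc_of% ht', wOfCo, id_smpHom_comp, Category.assoc,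
    ht.pentagon₂ L R M N, reassoc_of% hγ]
  rw [wOfCo]

lemma goodWco (ht : CoTetraHom S Sx t) (hio : ∀ M N : C, IsIso (wOfCo S Sx t M N)) :
    GoodWco S Sx (wOfCo S Sx t) :=
  ⟨ht.wOfCo_naturality, hio, ht.wOfCo_heptagon hio, ht.wOfCo_tetragon⟩

end CoTetraHom

noncomputable def phiOfW (S Sx : RightMonoidalStruct C R)
    (w : ∀ M N : C, S.smp N M ⟶ Sx.smp M (S.smp N R)) (M N : C) : S.smp N M ⟶ Sx.smp M N :=
  w M N ≫ Sx.smpHom (𝟙 M) (S.ε N)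

namespace GoodWco

variable {S Sx : RightMonoidalStruct C R} [∀ L M N : C, IsIso (Sx.γ L M N)]
  [∀ M : C, IsIso (Sx.ε M)] {w : ∀ M N : C, S.smp N M ⟶ Sx.smp M (S.smp N R)}
  (hw : GoodWco S Sx w)

noncomputable def ψ (M L : C) : S.smp (S.smp L R) M ⟶ S.smp L M :=
  phiOfW S Sx w M (S.smp L R) ≫ hw.winv M L

noncomputable def C2 (M N : C) : Sx.smp (S.smp M R) (S.smp N R) ⟶ S.smp (Sx.smp M N) R :=
  hw.winv (S.smp M R) N ≫ S.γ N M R ≫ S.smpHom (phiOfW S Sx w M N) (𝟙 R)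

lemma phiOfW_naturality (hw : GoodWco S Sx w) {M M' N N' : C} (f : M ⟶ M') (g : N ⟶ N') :
    S.smpHom g f ≫ phiOfW S Sx w M' N' = phiOfW S Sx w M N ≫ Sx.smpHom f g := by
  simp only [phiOfW, Category.assoc]
  rw [reassoc_of% (hw.natural f g), ← Sx.smpHom_comp, ← Sx.smpHom_comp, Category.comp_id,
    Category.id_comp, S.ε_natural g]

lemma C2_naturality {M M' N N' : C} (f : M ⟶ M') (g : N ⟶ N') :
    Sx.smpHom (S.smpHom f (𝟙 R)) (S.smpHom g (𝟙 R)) ≫ hw.C2 M' N'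
      = hw.C2 M N ≫ S.smpHom (Sx.smpHom f g) (𝟙 R) := by
  have hφ : S.smpHom (S.smpHom g f) (𝟙 R) ≫ S.smpHom (phiOfW S Sx w M' N') (𝟙 R)
      = S.smpHom (phiOfW S Sx w M N) (𝟙 R) ≫ S.smpHom (Sx.smpHom f g) (𝟙 R) := by
    rw [← comp_smpHom_id, ← comp_smpHom_id, hw.phiOfW_naturality f g]
  simp only [C2, Category.assoc]
  rw [reassoc_of% hw.winv_naturality, reassoc_of% S.γ_natural, hφ]

lemma η_winv (hunit : ∀ N : C, w R N = Sx.η (S.smp N R)) (N : C) :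
    Sx.η (S.smp N R) ≫ hw.winv R N = 𝟙 _ := by
  rw [← hunit, hom_winv]

lemma w_δ (hw : GoodWco S Sx w) (hunit : ∀ N : C, w R N = Sx.η (S.smp N R)) (L L' : C) :
    S.smpHom (𝟙 L) (S.η L') ≫ S.γ L R L' ≫ w L' (S.smp L R)
      = w L' L ≫ Sx.smpHom (𝟙 L') (S.δ L) := by
  have hη : S.smpHom (𝟙 L) (S.η L') ≫ S.smpHom (𝟙 L) (w L' R)
      = S.smpHom (𝟙 L) (inv (Sx.ε L')) ≫ S.smpHom (𝟙 L) (Sx.smpHom (𝟙 L') (S.η R)) := by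
    rw [← id_smpHom_comp, hw.tetragon L', id_smpHom_comp]
  have hδ : Sx.η (S.smp L R) ≫ Sx.smpHom (S.η R) (𝟙 (S.smp L R))
        ≫ hw.winv (S.smp R R) L ≫ S.γ L R R = S.δ L := by
    rw [reassoc_of% hw.winv_naturality_fst, reassoc_of% (hw.η_winv hunit), δ]
  rw [hw.γ_w, reassoc_of% hη, reassoc_of% hw.naturality_fst, reassoc_of% hw.naturality_fst,
    reassoc_of% (Sx.inv_γ_naturality (𝟙 L') (S.η R) (𝟙 (S.smp L R))),
    reassoc_of% Sx.smpHom_inv_ε_inv_γ, ← id_smpHom_comp, ← id_smpHom_comp, ← id_smpHom_comp, hδ]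

lemma smpHom_η_γ_ψ (hunit : ∀ N : C, w R N = Sx.η (S.smp N R)) (L M : C) :
    S.smpHom (𝟙 L) (S.η M) ≫ S.γ L R M ≫ hw.ψ M L = 𝟙 (S.smp L M) := by
  simp only [ψ, phiOfW, Category.assoc]
  rw [reassoc_of% (hw.w_δ hunit L M), ← reassoc_of% Sx.id_smpHom_comp, δ_ε, Sx.smpHom_id,
    Category.id_comp, hom_winv]

lemma δ_winv_γ_ψ (hunit : ∀ N : C, w R N = Sx.η (S.smp N R)) (M L : C) :
    Sx.smpHom (𝟙 (S.smp M R)) (S.δ L) ≫ hw.winv (S.smp M R) (S.smp L R)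
        ≫ S.γ (S.smp L R) M R ≫ S.smpHom (hw.ψ M L) (𝟙 R)
      = hw.winv (S.smp M R) L ≫ S.γ L M R := by
  have hη : S.smpHom (𝟙 L) (S.η (S.smp M R)) ≫ S.smpHom (𝟙 L) (S.γ R M R)
      = S.smpHom (𝟙 L) (S.smpHom (S.η M) (𝟙 R)) := by
    rw [← id_smpHom_comp, S.unit_triangle]
  have hψ : S.smpHom (S.smpHom (𝟙 L) (S.η M)) (𝟙 R) ≫ S.smpHom (S.γ L R M) (𝟙 R)
        ≫ S.smpHom (hw.ψ M L) (𝟙 R) = 𝟙 _ := by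
    rw [← comp_smpHom_id, ← comp_smpHom_id, hw.smpHom_η_γ_ψ hunit L M, S.smpHom_id]
  have := hw.iso (S.smp M R) L
  rw [← cancel_epi (w (S.smp M R) L), hw.hom_winv_assoc,
    ← reassoc_of% (hw.w_δ hunit L (S.smp M R)), hw.hom_winv_assoc,
    ← reassoc_of% (S.pentagon L R M R), reassoc_of% hη, reassoc_of% S.γ_natural, hψ,
    Category.comp_id]

lemma C2_lax_unit (hunit : ∀ N : C, w R N = Sx.η (S.smp N R)) (X : C) :
    Sx.η (S.smp X R) ≫ Sx.smpHom (S.η R) (𝟙 (S.smp X R)) ≫ hw.C2 R X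
      = S.smpHom (Sx.η X) (𝟙 R) := by
  rw [C2]
  have hφ : phiOfW S Sx w R X = S.ε X ≫ Sx.η X := by
    rw [phiOfW, hunit X, ← Sx.η_natural (S.ε X)]
  rw [reassoc_of% hw.winv_naturality_fst, reassoc_of% (hw.η_winv hunit), hφ, comp_smpHom_id,
    ← Category.assoc, ← Category.assoc, ← δ, δ_smpHom_ε, Category.id_comp]

lemma C2_lax_counit (X : C) :
    Sx.smpHom (𝟙 (S.smp X R)) (S.η R) ≫ hw.C2 X R ≫ S.smpHom (Sx.ε X) (𝟙 R)
      = Sx.ε (S.smp X R) := by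
  have hφ : S.η X ≫ phiOfW S Sx w X R ≫ Sx.ε X = 𝟙 X := by
    rw [phiOfW, Category.assoc, reassoc_of% hw.tetragon X, ← reassoc_of% Sx.id_smpHom_comp,
      S.unit_counit, Sx.smpHom_id, Category.id_comp, IsIso.inv_hom_id]
  have hQφ : S.smpHom (S.η X) (𝟙 R) ≫ S.smpHom (phiOfW S Sx w X R) (𝟙 R)
        ≫ S.smpHom (Sx.ε X) (𝟙 R) = 𝟙 _ := by
    rw [← comp_smpHom_id, ← comp_smpHom_id, hφ, S.smpHom_id]
  simp only [C2, Category.assoc]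
  rw [reassoc_of% hw.smpHom_η_winv, reassoc_of% (S.unit_triangle X R), hQφ, Category.comp_id]

lemma C2_ε (M N : C) :
    hw.C2 M N ≫ S.ε (Sx.smp M N) = Sx.smpHom (S.ε M) (S.ε N) := by
  simp only [C2, Category.assoc]
  rw [S.ε_natural, reassoc_of% (S.counit_triangle N M), phiOfW, reassoc_of% hw.naturality_fst,
    hw.winv_hom_assoc, ← Sx.smpHom_comp, Category.comp_id, Category.id_comp]

lemma C2_δ (hunit : ∀ N : C, w R N = Sx.η (S.smp N R)) (M N : C) :
    hw.C2 M N ≫ S.δ (Sx.smp M N)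
      = Sx.smpHom (S.δ M) (S.δ N) ≫ hw.C2 (S.smp M R) (S.smp N R)
          ≫ S.smpHom (hw.C2 M N) (𝟙 R) := by
  have hψ : phiOfW S Sx w (S.smp M R) (S.smp N R) ≫ hw.C2 M N
      = hw.ψ (S.smp M R) N ≫ S.γ N M R ≫ S.smpHom (phiOfW S Sx w M N) (𝟙 R) := by
    simp only [C2, ψ, Category.assoc]
  conv_lhs => rw [C2]
  simp only [Category.assoc]
  rw [S.δ_naturality, reassoc_of% S.γ_δ, ← reassoc_of% hw.winv_naturality_fst]
  conv_rhs =>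
    rw [← Sx.smpHom_id_comp_id_smpHom, C2]
    simp only [Category.assoc]
    rw [← comp_smpHom_id, hψ, comp_smpHom_id, comp_smpHom_id,
      reassoc_of% hw.δ_winv_γ_ψ hunit (S.smp M R) N]

lemma phiOfW_assoc (hw : GoodWco S Sx w) (L M N : C) :
    S.γ N M L ≫ S.smpHom (phiOfW S Sx w M N) (𝟙 L) ≫ phiOfW S Sx w L (Sx.smp M N)
        ≫ Sx.γ L M N
      = S.smpHom (𝟙 N) (phiOfW S Sx w L M) ≫ phiOfW S Sx w (Sx.smp L M) N := by
  have hα : inv (Sx.γ L (S.smp M R) (S.smp N R))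
        ≫ Sx.smpHom (𝟙 L) (Sx.smpHom (S.ε M) (S.ε N)) ≫ Sx.γ L M N
      = Sx.smpHom (Sx.smpHom (𝟙 L) (S.ε M)) (S.ε N) := by
    rw [← Category.assoc, ← Sx.inv_γ_naturality (𝟙 L) (S.ε M) (S.ε N), Category.assoc,
      IsIso.inv_hom_id, Category.comp_id]
  have hε : hw.winv (S.smp M R) N ≫ S.γ N M R
        ≫ S.smpHom (phiOfW S Sx w M N) (𝟙 R) ≫ S.ε (Sx.smp M N)
      = Sx.smpHom (S.ε M) (S.ε N) := by
    simpa only [C2, Category.assoc] using hw.C2_ε M N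
  conv_lhs => rw [phiOfW.eq_1 S Sx w L (Sx.smp M N)]
  simp only [Category.assoc]
  rw [reassoc_of% hw.natural (𝟙 L) (phiOfW S Sx w M N), reassoc_of% hw.γ_w,
    ← reassoc_of% id_smpHom_comp, ← reassoc_of% id_smpHom_comp, ← reassoc_of% id_smpHom_comp]
  simp only [Category.assoc]
  rw [hε, hα]
  conv_rhs => rw [phiOfW, phiOfW, id_smpHom_comp, Category.assoc, reassoc_of% hw.naturality_fst,
    ← Sx.smpHom_comp, Category.comp_id, Category.id_comp]

lemma C2_lax_assoc (L M N : C) :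
    Sx.smpHom (𝟙 (S.smp L R)) (hw.C2 M N) ≫ hw.C2 L (Sx.smp M N)
        ≫ S.smpHom (Sx.γ L M N) (𝟙 R)
      = Sx.γ (S.smp L R) (S.smp M R) (S.smp N R)
          ≫ Sx.smpHom (hw.C2 L M) (𝟙 (S.smp N R))
          ≫ hw.C2 (Sx.smp L M) N := by
  have hγ := S.γ_natural (phiOfW S Sx w M N) (𝟙 L) (𝟙 R)
  rw [S.smpHom_id] at hγ
  conv_lhs => rw [C2, C2, ← Category.assoc (hw.winv (S.smp M R) N), id_smpHom_comp]
  simp only [Category.assoc]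
  rw [reassoc_of% (hw.heptagon_winv (S.smp L R) M N), reassoc_of% hw.winv_naturality,
    hw.hom_winv_assoc, reassoc_of% hγ, ← reassoc_of% (S.pentagon N M L R),
    ← reassoc_of% comp_smpHom_id, ← reassoc_of% comp_smpHom_id, ← comp_smpHom_id]
  simp only [Category.assoc]
  rw [hw.phiOfW_assoc L M N, comp_smpHom_id]
  conv_rhs => rw [C2.eq_1 hw (Sx.smp L M) N]
  rw [reassoc_of% hw.winv_naturality_fst]
  conv_rhs =>
    rw [C2, id_smpHom_comp, id_smpHom_comp]
    simp only [Category.assoc]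
  rw [reassoc_of% S.γ_natural]

lemma δ_C2_winv (hunit : ∀ N : C, w R N = Sx.η (S.smp N R)) (M L : C) :
    Sx.smpHom (𝟙 (S.smp M R)) (S.δ L) ≫ hw.C2 M (S.smp L R)
        ≫ S.smpHom (hw.winv M L) (𝟙 R)
      = hw.winv (S.smp M R) L ≫ S.γ L M R := by
  rw [C2, Category.assoc, Category.assoc, ← comp_smpHom_id, ← ψ]
  exact hw.δ_winv_γ_ψ hunit M L

lemma winv_hexagon (hunit : ∀ N : C, w R N = Sx.η (S.smp N R)) (L M N : C) :
    (inv (Sx.γ N (S.smp M R) (S.smp L R))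
        ≫ Sx.smpHom (𝟙 N) (Sx.smpHom (𝟙 (S.smp M R)) (S.δ L))
        ≫ Sx.smpHom (𝟙 N) (hw.C2 M (S.smp L R)))
        ≫ Sx.smpHom (𝟙 N) (S.smpHom (hw.winv M L) (𝟙 R))
        ≫ hw.winv N (S.smp L M)
      = Sx.smpHom (hw.winv N M) (S.smpHom (𝟙 L) (𝟙 R))
          ≫ hw.winv (S.smp M N) L ≫ S.γ L M N := by
  simp only [Category.assoc]
  rw [← reassoc_of% id_smpHom_comp, ← reassoc_of% id_smpHom_comp]
  simp only [Category.assoc]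
  rw [hw.δ_C2_winv hunit M L, reassoc_of% (hw.heptagon_winv N M L), hw.hom_winv, Category.comp_id,
    IsIso.inv_hom_id_assoc, S.smpHom_id, reassoc_of% hw.winv_naturality_fst]

noncomputable def comonad (hunit : ∀ N : C, w R N = Sx.η (S.smp N R)) : MonoidalComonadStr Sx where
  obj M := S.smp M R
  map f := S.smpHom f (𝟙 R)
  map_id X := S.smpHom_id X R
  map_comp f g := by rw [← S.smpHom_comp, Category.comp_id]
  Δc := S.δ
  εc := S.ε
  Δc_natural f := S.δ_naturality f
  εc_natural f := S.ε_natural f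
  coassoc X := S.δ_smpHom_δ X
  counit_left := δ_ε S
  counit_right := δ_smpHom_ε S
  C2 := hw.C2
  C0 := S.η R
  C2_natural f g := hw.C2_naturality f g
  lax_assoc := hw.C2_lax_assoc
  lax_unit := hw.C2_lax_unit hunit
  lax_counit := hw.C2_lax_counit
  Δc_monoidal := hw.C2_δ hunit
  Δc_monoidal_unit := S.η_δ
  εc_monoidal := hw.C2_ε
  εc_monoidal_unit := S.unit_counit

lemma coTwist_winv [∀ M : C, IsIso (Sx.η M)] (hunit : ∀ N : C, w R N = Sx.η (S.smp N R)) :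
    CoTwist S Sx (hw.comonad hunit) (fun M N => hw.winv N M) := by
  refine ⟨?_, ?_, ?_, ?_, ?_⟩
  · intro M M' N N' f g
    exact hw.winv_naturality g f
  · exact fun M N => hw.isIso_winv N M
  · exact hw.winv_hexagon hunit
  · intro N
    show (inv (Sx.ε N) ≫ Sx.smpHom (𝟙 N) (S.η R)) ≫ hw.winv N R = S.η N
    rw [Category.assoc, smpHom_η_winv, IsIso.inv_hom_id_assoc]
  · intro M
    show hw.winv R M ≫ S.ε M = inv (Sx.η (S.smp M R)) ≫ S.ε M
    rw [← IsIso.inv_eq_of_hom_inv_id (hw.η_winv hunit M)]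

end GoodWco

noncomputable def uOfV (S Sx : RightMonoidalStruct C R) (Co : MonoidalComonadStr Sx)
    (v : ∀ M N : C, Sx.smp N (Co.obj M) ⟶ S.smp M N) (N : C) : Co.obj N ⟶ S.smp N R :=
  Sx.η (Co.obj N) ≫ v N R

namespace CoTwist

variable {S Sx : RightMonoidalStruct C R} [∀ L M N : C, IsIso (Sx.γ L M N)]
  [∀ M : C, IsIso (Sx.η M)] [∀ M : C, IsIso (Sx.ε M)] {Co : MonoidalComonadStr Sx}
  {v : ∀ M N : C, Sx.smp N (Co.obj M) ⟶ S.smp M N} (hv : CoTwist S Sx Co v)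

noncomputable def vinv (M N : C) : S.smp M N ⟶ Sx.smp N (Co.obj M) :=
  @inv _ _ _ _ (v M N) (hv.iso M N)

lemma hom_vinv (M N : C) : v M N ≫ hv.vinv M N = 𝟙 _ :=
  @IsIso.hom_inv_id _ _ _ _ _ (hv.iso M N)

lemma vinv_hom (M N : C) : hv.vinv M N ≫ v M N = 𝟙 _ :=
  @IsIso.inv_hom_id _ _ _ _ _ (hv.iso M N)

lemma isIso_vinv (M N : C) : IsIso (hv.vinv M N) :=
  @IsIso.inv_isIso _ _ _ _ _ (hv.iso M N)

lemma hom_vinv_assoc (M N : C) {Z : C} (h : Sx.smp N (Co.obj M) ⟶ Z) :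
    v M N ≫ hv.vinv M N ≫ h = h := by
  rw [← Category.assoc, hom_vinv, Category.id_comp]

noncomputable def w (M N : C) : S.smp N M ⟶ Sx.smp M (S.smp N R) :=
  hv.vinv N M ≫ Sx.smpHom (𝟙 M) (uOfV S Sx Co v N)

lemma vinv_naturality {M M' N N' : C} (f : M ⟶ M') (g : N ⟶ N') :
    S.smpHom f g ≫ hv.vinv M' N' = hv.vinv M N ≫ Sx.smpHom g (Co.map f) := by
  have := hv.iso M N
  rw [← cancel_epi (v M N), hom_vinv_assoc, ← reassoc_of% hv.natural f g, hom_vinv,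
    Category.comp_id]

lemma uOfV_naturality (hv : CoTwist S Sx Co v) {N N' : C} (f : N ⟶ N') :
    Co.map f ≫ uOfV S Sx Co v N' = uOfV S Sx Co v N ≫ S.smpHom f (𝟙 R) := by
  rw [uOfV, uOfV, reassoc_of% Sx.η_natural, hv.natural, Category.assoc]

lemma w_naturality {M M' N N' : C} (f : M ⟶ M') (g : N ⟶ N') :
    S.smpHom g f ≫ hv.w M' N'
      = hv.w M N ≫ Sx.smpHom f (S.smpHom g (𝟙 R)) := by
  rw [w, w, reassoc_of% hv.vinv_naturality g f, ← Sx.smpHom_comp, Category.comp_id,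
    uOfV_naturality hv g, Category.assoc, ← Sx.smpHom_comp, Category.id_comp]

lemma isIso_uOfV (hv : CoTwist S Sx Co v) (N : C) : IsIso (uOfV S Sx Co v N) := by
  have := hv.iso N R
  unfold uOfV
  infer_instance

lemma isIso_w (M N : C) : IsIso (hv.w M N) := by
  have := hv.isIso_vinv N M
  have := hv.isIso_uOfV N
  unfold w
  infer_instance

lemma C0_uOfV (hv : CoTwist S Sx Co v) : Co.C0 ≫ uOfV S Sx Co v R = S.η R := by
  rw [uOfV, reassoc_of% Sx.η_natural Co.C0, ← Sx.inv_ε_unit, ← hv.unit R, Category.assoc]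

lemma w_tetragon (M : C) :
    S.η M ≫ hv.w M R = inv (Sx.ε M) ≫ Sx.smpHom (𝟙 M) (S.η R) := by
  rw [w, ← hv.unit M, Category.assoc, Category.assoc, hom_vinv_assoc, ← Sx.id_smpHom_comp,
    hv.C0_uOfV]

lemma uOfV_hexagon (hv : CoTwist S Sx Co v) (M N : C) :
    Sx.smpHom (𝟙 (Co.obj M)) (Co.Δc N) ≫ Co.C2 M (Co.obj N) ≫ Co.map (v N M)
        ≫ uOfV S Sx Co v (S.smp N M)
      = Sx.smpHom (uOfV S Sx Co v M) (𝟙 (Co.obj N)) ≫ v N (S.smp M R) ≫ S.γ N M R := by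
  have hex := hv.hexagon N M R
  rw [Co.map_id, ← Sx.smpHom_inv_η_η (Co.obj M) (Co.obj N)] at hex
  simp only [Category.assoc] at hex
  have hη : Sx.η (Sx.smp (Co.obj M) (Co.obj N))
        ≫ Sx.smpHom (𝟙 R) (Sx.smpHom (𝟙 (Co.obj M)) (Co.Δc N))
        ≫ Sx.smpHom (𝟙 R) (Co.C2 M (Co.obj N))
        ≫ Sx.smpHom (𝟙 R) (Co.map (v N M)) ≫ v (S.smp N M) R
      = Sx.smpHom (𝟙 (Co.obj M)) (Co.Δc N) ≫ Co.C2 M (Co.obj N) ≫ Co.map (v N M)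
        ≫ Sx.η (Co.obj (S.smp N M)) ≫ v (S.smp N M) R := by
    rw [← reassoc_of% (Sx.η_natural (Sx.smpHom (𝟙 (Co.obj M)) (Co.Δc N))),
      ← reassoc_of% (Sx.η_natural (Co.C2 M (Co.obj N))),
      ← reassoc_of% (Sx.η_natural (Co.map (v N M)))]
  rw [hη] at hex
  simp only [uOfV]
  rw [comp_smpHom_id, Category.assoc, ← hex, ← reassoc_of% Sx.comp_smpHom_id, IsIso.hom_inv_id,
    Sx.smpHom_id, Category.id_comp]

lemma inv_w (M N : C) :
    @inv _ _ _ _ (hv.w (S.smp M R) N) (hv.isIso_w (S.smp M R) N)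
      = Sx.smpHom (𝟙 (S.smp M R)) (@inv _ _ _ _ (uOfV S Sx Co v N) (hv.isIso_uOfV N))
          ≫ v N (S.smp M R) := by
  have := hv.isIso_uOfV N
  have := hv.isIso_w (S.smp M R) N
  apply IsIso.inv_eq_of_hom_inv_id
  rw [w]
  simp only [Category.assoc]
  rw [← reassoc_of% id_smpHom_comp, IsIso.hom_inv_id, Sx.smpHom_id, Category.id_comp, hv.vinv_hom]

lemma w_heptagon (L M N : C) :
    S.γ N M L ≫ hv.w L (S.smp N M)
      = S.smpHom (𝟙 N) (hv.w L M) ≫ hv.w (Sx.smp L (S.smp M R)) N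
          ≫ inv (Sx.γ L (S.smp M R) (S.smp N R))
          ≫ Sx.smpHom (𝟙 L)
              (@inv _ _ _ _ (hv.w (S.smp M R) N) (hv.isIso_w (S.smp M R) N))
          ≫ Sx.smpHom (𝟙 L) (S.γ N M R) := by
  have := hv.iso N (S.smp M L)
  have : IsIso (Sx.smpHom (v M L) (𝟙 (Co.obj N))) := by
    have := hv.iso M L; infer_instance
  have hex := hv.hexagon N M L
  simp only [Co.map_id, Category.assoc] at hex
  have hnat : Sx.smpHom (hv.w L M) (𝟙 (Co.obj N)) ≫ v N (Sx.smp L (S.smp M R))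
      = v N (S.smp M L) ≫ S.smpHom (𝟙 N) (hv.w L M) := by
    simpa only [Co.map_id] using hv.natural (𝟙 N) (hv.w L M)
  have hvw : v M L ≫ hv.w L M = Sx.smpHom (𝟙 L) (uOfV S Sx Co v M) := by
    rw [w, hv.hom_vinv_assoc]
  have hu : Sx.smpHom (uOfV S Sx Co v M) (uOfV S Sx Co v N)
        ≫ Sx.smpHom (𝟙 (S.smp M R)) (@inv _ _ _ _ (uOfV S Sx Co v N) (hv.isIso_uOfV N))
      = Sx.smpHom (uOfV S Sx Co v M) (𝟙 (Co.obj N)) := by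
    rw [← Sx.smpHom_comp, Category.comp_id, IsIso.hom_inv_id]
  rw [← cancel_epi (v N (S.smp M L)), ← cancel_epi (Sx.smpHom (v M L) (𝟙 (Co.obj N)))]
  conv_lhs =>
    rw [← reassoc_of% hex, w, hv.hom_vinv_assoc, ← reassoc_of% id_smpHom_comp,
      ← reassoc_of% id_smpHom_comp, ← id_smpHom_comp]
    simp only [Category.assoc]
    rw [hv.uOfV_hexagon M N]
  conv_rhs =>
    rw [← reassoc_of% hnat, CoTwist.w.eq_1 hv (Sx.smp L (S.smp M R)) N]
    simp only [Category.assoc]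
    rw [hv.hom_vinv_assoc, ← reassoc_of% comp_smpHom_id, hvw,
      reassoc_of% smpHom_id_comp_id_smpHom,
      reassoc_of% (Sx.inv_γ_naturality (𝟙 L) (uOfV S Sx Co v M) (uOfV S Sx Co v N)),
      hv.inv_w M N, ← reassoc_of% id_smpHom_comp, ← id_smpHom_comp]
    simp only [Category.assoc]
    rw [reassoc_of% hu]

lemma goodWco : GoodWco S Sx (hv.w) :=
  ⟨hv.w_naturality, hv.isIso_w, hv.w_heptagon, hv.w_tetragon⟩

end CoTwist

/-- Theorem 9.1 of Szlachányi; the Corepresentability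
Theorem.  Let `𝓔` carry a right-monoidal structure `⋆` and an ordinary
monoidal structure `⊗` with the same unit `R`, and let `Q = ⟨- ⋆ R, δ, ε⟩` be
the canonical comonad of the `⋆`-structure.  The following are equivalent:
(i) the `⋆`-structure is `⊗`-corepresentable: there are a `⊗`-monoidal comonad
    `⟨C, Δ, ϵ, C₂, C₀⟩` and a twist isomorphism `M ⋆ N ≅ N ⊗ CM` from the
    `⋆`-structure to the right-monoidal structure `M ⊙ N := N ⊗ CM` it induces;
(ii) there is a natural isomorphism `w_{M,N} : N ⋆ M → M ⊗ QN` satisfying the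
    heptagon and tetragon equations;
(iii) there is a tetrahedral isomorphism `t_{L,M,N} : N⋆(L⊗M) → L⊗(N⋆M)`. -/
theorem corepresentability (S Sx : RightMonoidalStruct C R)
    [∀ L M N : C, IsIso (Sx.γ L M N)]
    [∀ M : C, IsIso (Sx.η M)]
    [∀ M : C, IsIso (Sx.ε M)] :
    ((∃ (Co : MonoidalComonadStr Sx)
        (v : ∀ M N : C, Sx.smp N (Co.obj M) ⟶ S.smp M N), CoTwist S Sx Co v)
      ↔ (∃ w : ∀ M N : C, S.smp N M ⟶ Sx.smp M (S.smp N R), GoodWco S Sx w)) ∧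
    ((∃ w : ∀ M N : C, S.smp N M ⟶ Sx.smp M (S.smp N R), GoodWco S Sx w)
      ↔ (∃ t : ∀ L M N : C, S.smp N (Sx.smp L M) ⟶ Sx.smp L (S.smp N M),
          CoTetraHom S Sx t ∧ ∀ M N : C, IsIso (wOfCo S Sx t M N))) := by
  refine ⟨⟨fun ⟨_, _, hv⟩ => ⟨hv.w, hv.goodWco⟩, fun ⟨_, hw⟩ => ?_⟩,
    ⟨fun ⟨_, hw⟩ => ⟨hw.tetra, hw.coTetraHom, hw.isIso_wOfCo_tetra⟩,
      fun ⟨t, ht, hio⟩ => ⟨wOfCo S Sx t, ht.goodWco hio⟩⟩⟩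
  have hw' := hw.coTetraHom.goodWco hw.isIso_wOfCo_tetra
  exact ⟨hw'.comonad hw.coTetraHom.wOfCo_unit, fun M N => hw'.winv N M,
    hw'.coTwist_winv hw.coTetraHom.wOfCo_unit⟩
end
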